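/- Let S be a unipotent m×m integer matrix, b, x ∈ 𝕋^m, and T x = Sx + b. Then for every k ∈ ℤ^m and n ∈ ℕ: k · T^n x = k·x + Σ_{j=1}^{m} C(n,j)·( (Sᵗ−id)^j k · x + (Sᵗ−id)^{j−1} k · b ), where C(n,j) are binomial coefficients and Sᵗ is the transpose of S. -/

import Mathlib

open MeasureTheory Filter

/-- The `m`-dimensional torus `𝕋^m`. -/
abbrev Torus (m : ℕ) := Fin m → UnitAddCircle

/-- The pairing `k · x = Σ kᵢ xᵢ ∈ 𝕋` between `ℤ^m` and `𝕋^m`. -/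
noncomputable def zdot {m : ℕ} (k : Fin m → ℤ) (x : Torus m) : UnitAddCircle :=
  ∑ i, k i • x i

/-- Action of an integer matrix on the torus `𝕋^m`. -/
noncomputable def matAct {m : ℕ} (S : Matrix (Fin m) (Fin m) ℤ) (x : Torus m) : Torus m :=
  fun i => ∑ j, S i j • x j

/-- The `j`-th non-constant coefficient (in the binomial basis) of the polynomial
`n ↦ k · Tⁿ x` for the affine map `T x = S x + b`:
`cⱼ = ((Sᵗ − 1)ʲ k) · x + ((Sᵗ − 1)^{j−1} k) · b`. -/
noncomputable def coefC {m : ℕ} (S : Matrix (Fin m) (Fin m) ℤ) (b : Torus m)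
    (k : Fin m → ℤ) (x : Torus m) (j : ℕ) : UnitAddCircle :=
  zdot (((S.transpose - 1) ^ j).mulVec k) x + zdot (((S.transpose - 1) ^ (j - 1)).mulVec k) b

lemma zdot_add_right {m : ℕ} (k : Fin m → ℤ) (x y : Torus m) :
    zdot k (x + y) = zdot k x + zdot k y := by
  simp [zdot, smul_add, Finset.sum_add_distrib]

lemma zdot_add_left {m : ℕ} (k l : Fin m → ℤ) (x : Torus m) :
    zdot (k + l) x = zdot k x + zdot l x := by
  simp [zdot, add_smul, Finset.sum_add_distrib]

lemma zdot_zero {m : ℕ} (x : Torus m) : zdot (0 : Fin m → ℤ) x = 0 := by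
  simp [zdot]

lemma zdot_matAct {m : ℕ} (S : Matrix (Fin m) (Fin m) ℤ) (k : Fin m → ℤ) (x : Torus m) :
    zdot k (matAct S x) = zdot (S.transpose.mulVec k) x := by
  simp only [zdot, matAct, Matrix.mulVec, dotProduct, Matrix.transpose_apply,
    Finset.smul_sum, Finset.sum_smul, smul_smul]
  rw [Finset.sum_comm]
  exact Finset.sum_congr rfl fun j _ => Finset.sum_congr rfl fun i _ => by rw [mul_comm]

/-- The binomial expansion of `k · Tⁿx` for the unipotent affine map `T x = S x + b` on `𝕋^m`:
`k · Tⁿ x = k·x + Σ_{j=1}^{m} C(n,j) ( (Sᵗ−1)ʲ k · x + (Sᵗ−1)^{j−1} k · b )`. -/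
theorem stmt8 {m : ℕ} (S : Matrix (Fin m) (Fin m) ℤ) (hS : (S - 1) ^ m = 0)
    (b x : Torus m) (k : Fin m → ℤ) (n : ℕ) :
    zdot k ((fun y => matAct S y + b)^[n] x)
      = zdot k x + ∑ j ∈ Finset.Icc 1 m, (n.choose j) • coefC S b k x j := by
  have hN : (S.transpose - 1) ^ m = 0 := by
    have := congrArg Matrix.transpose hS
    simpa [Matrix.transpose_pow, Matrix.transpose_sub] using this
  induction n generalizing k with
  | zero =>
    rw [Function.iterate_zero_apply]
    rw [Finset.sum_eq_zero, add_zero]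
    intro j hj
    rw [Nat.choose_eq_zero_of_lt (Finset.mem_Icc.1 hj).1, zero_smul]
  | succ n ih =>
    set N := S.transpose - 1 with hNdef
    set d : ℕ → UnitAddCircle := fun j => zdot ((N ^ j).mulVec k) x with hd
    set e : ℕ → UnitAddCircle := fun j => zdot ((N ^ j).mulVec k) b with he
    have hcoef : ∀ j, coefC S b k x j = d j + e (j - 1) := fun j => rfl
    have hcoef2 : ∀ j, 1 ≤ j → coefC S b (N.mulVec k) x j = d (j + 1) + e j := by
      intro j hj
      show zdot (((S.transpose - 1) ^ j).mulVec (N.mulVec k)) x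
          + zdot (((S.transpose - 1) ^ (j - 1)).mulVec (N.mulVec k)) b = _
      rw [← hNdef, Matrix.mulVec_mulVec, Matrix.mulVec_mulVec, ← pow_succ, ← pow_succ]
      have : j - 1 + 1 = j := by omega
      rw [this]
    rw [Function.iterate_succ_apply']
    rw [zdot_add_right, zdot_matAct]
    have hsplit : S.transpose.mulVec k = k + N.mulVec k := by
      have : S.transpose = 1 + N := by rw [hNdef]; abel
      rw [this, Matrix.add_mulVec, Matrix.one_mulVec]
    rw [hsplit, zdot_add_left, ih k, ih (N.mulVec k)]
    have hs1 : ∑ j ∈ Finset.Icc 1 m, n.choose j • coefC S b k x j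
        = ∑ j ∈ Finset.Icc 1 m, n.choose j • (d j + e (j - 1)) :=
      Finset.sum_congr rfl fun j _ => by rw [hcoef]
    have hs2 : ∑ j ∈ Finset.Icc 1 m, n.choose j • coefC S b (N.mulVec k) x j
        = ∑ j ∈ Finset.Icc 1 m, n.choose j • (d (j + 1) + e j) :=
      Finset.sum_congr rfl fun j hj => by rw [hcoef2 j (Finset.mem_Icc.1 hj).1]
    have hs3 : ∑ j ∈ Finset.Icc 1 m, (n + 1).choose j • coefC S b k x j
        = ∑ j ∈ Finset.Icc 1 m, (n + 1).choose j • (d j + e (j - 1)) :=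
      Finset.sum_congr rfl fun j _ => by rw [hcoef]
    rw [hs1, hs2, hs3]
    have hgm : n.choose m • (d (m + 1) + e m) = 0 := by
      have h1 : d (m + 1) = 0 := by
        show zdot ((N ^ (m + 1)).mulVec k) x = 0
        rw [pow_succ, hN]
        simp [Matrix.zero_mulVec, zdot_zero]
      have h2 : e m = 0 := by
        show zdot ((N ^ m).mulVec k) b = 0
        rw [hN]
        simp [Matrix.zero_mulVec, zdot_zero]
      rw [h1, h2, add_zero, smul_zero]
    have hshift : ∑ j ∈ Finset.Icc 1 m, n.choose (j - 1) • (d j + e (j - 1))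
        = (d 1 + e 0) + ∑ j ∈ Finset.Icc 1 m, n.choose j • (d (j + 1) + e j) := by
      rw [← Finset.Ico_add_one_right_eq_Icc, Finset.sum_Ico_eq_sum_range, Finset.sum_Ico_eq_sum_range]
      norm_num
      set g : ℕ → UnitAddCircle := fun i => n.choose i • d (i + 1) + n.choose i • e i
        with hgdef
      have hgm' : g m = 0 := by
        rw [hgdef]
        simpa [smul_add] using hgm
      have e1 := Finset.sum_range_succ g m
      have e2 := Finset.sum_range_succ' g m
      rw [hgm', add_zero] at e1
      have hmain : ∑ i ∈ Finset.range m, g i = g 0 + ∑ i ∈ Finset.range m, g (i + 1) := by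
        rw [← e1, e2, add_comm]
      have hL : ∀ i, n.choose i • d (1 + i) + n.choose i • e i = g i := by
        intro i; rw [hgdef, Nat.add_comm 1 i]
      have hR : ∀ i, n.choose (1 + i) • d (1 + i + 1) + n.choose (1 + i) • e (1 + i)
          = g (i + 1) := by
        intro i; rw [hgdef, Nat.add_comm 1 i]
      rw [Finset.sum_congr rfl fun i _ => hL i, Finset.sum_congr rfl fun i _ => hR i, hmain]
      congr 1
      simp [hgdef]
    have hPascal : ∑ j ∈ Finset.Icc 1 m, (n + 1).choose j • (d j + e (j - 1))
        = ∑ j ∈ Finset.Icc 1 m, n.choose j • (d j + e (j - 1))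
          + ∑ j ∈ Finset.Icc 1 m, n.choose (j - 1) • (d j + e (j - 1)) := by
      rw [← Finset.sum_add_distrib]
      apply Finset.sum_congr rfl
      intro j hj
      obtain ⟨j', rfl⟩ : ∃ j', j = j' + 1 := by
        have := (Finset.mem_Icc.1 hj).1; exact ⟨j - 1, by omega⟩
      rw [Nat.choose_succ_succ, Nat.add_sub_cancel, add_smul, add_comm]
    have hd1 : d 1 = zdot (N.mulVec k) x := by
      show zdot ((N ^ 1).mulVec k) x = _
      rw [pow_one]
    have he0 : e 0 = zdot k b := by
      show zdot ((N ^ 0).mulVec k) b = _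
      rw [pow_zero, Matrix.one_mulVec]
    rw [hPascal, hshift, hd1, he0]
    abel
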